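/- arXiv:0704.0775 — 11 statements merged into one kernel-verified Lean document; each statement's English description precedes it below -/
import Mathlib

section
/- Let R be a ring, n ≥ 2, and let e and f be algebraically equivalent n-potents in R. Then there exist elements a and b of R with e = ab, f = ba, and moreover a = e^{n-1}a = af^{n-1} = e^{n-1}af^{n-1} and b = f^{n-1}b = be^{n-1} = f^{n-1}be^{n-1}. -/
/-!
`p = e ^ (n - 1)` and `q = f ^ (n - 1)` are idempotents with `p * e * p = e` and
`q * f * q = f`, and `a * q = p * a` because `a * (b * a) ^ k = (a * b) ^ k * a`.
Cutting the witnesses down to the corners, `a' = p * a * q` and `b' = q * b * p`, then keeps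
`a' * b' = p * (a * b) * p = e` and `b' * a' = q * (b * a) * q = f`.
-/

section Monoid

variable {M : Type*} [Monoid M]

theorem pow_sub_one_mul_of_pow_eq_self {e : M} {n : ℕ} (he : e ^ n = e) :
    e ^ (n - 1) * e = e := by
  obtain _ | n := n
  · simp
  · simpa [pow_succ] using he

theorem mul_pow_sub_one_of_pow_eq_self {e : M} {n : ℕ} (he : e ^ n = e) :
    e * e ^ (n - 1) = e :=
  (Commute.self_pow e _).eq.trans (pow_sub_one_mul_of_pow_eq_self he)

theorem pow_sub_one_mul_mul_pow_sub_one_of_pow_eq_self {e : M} {n : ℕ} (he : e ^ n = e) :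
    e ^ (n - 1) * e * e ^ (n - 1) = e := by
  rw [pow_sub_one_mul_of_pow_eq_self he, mul_pow_sub_one_of_pow_eq_self he]

theorem isIdempotentElem_pow_sub_one_of_pow_eq_self {e : M} {n : ℕ} (he : e ^ n = e) :
    IsIdempotentElem (e ^ (n - 1)) := by
  obtain _ | _ | k := n
  iterate 2 simp [IsIdempotentElem]
  show e ^ (k + 1) * e ^ (k + 1) = e ^ (k + 1)
  calc e ^ (k + 1) * e ^ (k + 1) = e ^ k * (e * e ^ (k + 1)) := by
        rw [← mul_assoc, ← pow_succ]
    _ = e ^ k * e := by rw [← pow_succ', he]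
    _ = e ^ (k + 1) := (pow_succ e k).symm

theorem exists_corner_witnesses {a b p q : M} (hp : IsIdempotentElem p)
    (hq : IsIdempotentElem q) (hpq : a * q = p * a) (hab : p * (a * b) * p = a * b)
    (hba : q * (b * a) * q = b * a) :
    ∃ a' b' : M, a * b = a' * b' ∧ b * a = b' * a' ∧
      a' = p * a' ∧ a' = a' * q ∧ a' = p * a' * q ∧
      b' = q * b' ∧ b' = b' * p ∧ b' = q * b' * p := by
  refine ⟨p * a * q, q * b * p, ?_, ?_, ?_, ?_, ?_, ?_, ?_, ?_⟩
  · calc a * b = p * (p * a) * b * p := by rw [hp.mul_self_mul, ← hab]; simp only [mul_assoc]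
      _ = p * (a * q) * b * p := by rw [hpq]
      _ = p * a * q * (q * b * p) := by simp only [mul_assoc, hq.mul_self_mul]
  · calc b * a = q * b * (a * q) * q := by rw [← hba]; simp only [mul_assoc, hq.eq]
      _ = q * b * (p * a) * q := by rw [hpq]
      _ = q * b * p * (p * a * q) := by simp only [mul_assoc, hp.mul_self_mul]
  all_goals simp only [mul_assoc, hp.eq, hq.eq, hp.mul_self_mul, hq.mul_self_mul]

end Monoid

theorem npotent_algEquiv_nice_witnesses_general {R : Type*} [Ring R] (n : ℕ)
    (e f : R) (he : e ^ n = e) (hf : f ^ n = f)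
    (h : ∃ a b : R, e = a * b ∧ f = b * a) :
    ∃ a b : R, e = a * b ∧ f = b * a ∧
      a = e ^ (n - 1) * a ∧ a = a * f ^ (n - 1) ∧ a = e ^ (n - 1) * a * f ^ (n - 1) ∧
      b = f ^ (n - 1) * b ∧ b = b * e ^ (n - 1) ∧ b = f ^ (n - 1) * b * e ^ (n - 1) := by
  obtain ⟨a, b, rfl, rfl⟩ := h
  exact exists_corner_witnesses (isIdempotentElem_pow_sub_one_of_pow_eq_self he)
    (isIdempotentElem_pow_sub_one_of_pow_eq_self hf) (mul_pow_mul a b (n - 1)).symm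
    (pow_sub_one_mul_mul_pow_sub_one_of_pow_eq_self he)
    (pow_sub_one_mul_mul_pow_sub_one_of_pow_eq_self hf)

/-- If `e` and `f` are algebraically equivalent `n`-potents in a ring `R`, then the
witnesses `a`, `b` of the algebraic equivalence can be chosen so that
`a = e^(n-1) a = a f^(n-1) = e^(n-1) a f^(n-1)` and
`b = f^(n-1) b = b e^(n-1) = f^(n-1) b e^(n-1)`. -/
theorem npotent_algEquiv_nice_witnesses {R : Type*} [Ring R] (n : ℕ) (hn : 2 ≤ n)
    (e f : R) (he : e ^ n = e) (hf : f ^ n = f)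
    (h : ∃ a b : R, e = a * b ∧ f = b * a) :
    ∃ a b : R, e = a * b ∧ f = b * a ∧
      a = e ^ (n - 1) * a ∧ a = a * f ^ (n - 1) ∧ a = e ^ (n - 1) * a * f ^ (n - 1) ∧
      b = f ^ (n - 1) * b ∧ b = b * e ^ (n - 1) ∧ b = f ^ (n - 1) * b * e ^ (n - 1) :=
  npotent_algEquiv_nice_witnesses_general n e f he hf h
end

section
/- Let R be a ring and n ≥ 2. Algebraic equivalence is transitive on the set of n-potents of R: if e, f, g are n-potents in R with e ∼_a f and f ∼_a g, then e ∼_a g. (Concretely: if e = ab, f = ba = cd, g = dc for elements a,b,c,d of R, then there exist s, t in R with e = st and g = ts.) -/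
/-! If `e = ab`, `f = ba = cd` and `g = dc`, then `e ^ (k + 1) = a f ^ k b` and
`g ^ (k + 1) = d f ^ k c`. For `n`-potents `e` and `g` with `n = m + 2`, splitting off one
factor `f = cd` (resp. `f = ba`) from `f ^ (m + 1)` shows that `s = a f ^ m c` and `t = d b`
satisfy `e = st` and `g = ts`. -/

section Monoid

variable {M : Type*} [Monoid M]

theorem mul_pow_succ_eq (a b : M) (k : ℕ) : (a * b) ^ (k + 1) = a * (b * a) ^ k * b := by
  rw [pow_succ, ← mul_assoc, mul_pow_mul]

theorem eq_mul_and_eq_mul_of_pow_add_two_eq {m : ℕ} {e f g a b c d : M}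
    (he : e ^ (m + 2) = e) (hg : g ^ (m + 2) = g)
    (hab : e = a * b) (hba : f = b * a) (hcd : f = c * d) (hdc : g = d * c) :
    e = a * f ^ m * c * (d * b) ∧ g = d * b * (a * f ^ m * c) := by
  constructor
  · calc e = e ^ (m + 2) := he.symm
      _ = a * f ^ (m + 1) * b := by rw [hab, hba, mul_pow_succ_eq]
      _ = a * f ^ m * c * (d * b) := by
        rw [pow_succ]
        simp only [mul_assoc]
        rw [← mul_assoc c, ← hcd]
  · calc g = g ^ (m + 2) := hg.symm
      _ = d * f ^ (m + 1) * c := by rw [hdc, hcd, mul_pow_succ_eq]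
      _ = d * b * (a * f ^ m * c) := by
        rw [pow_succ']
        simp only [mul_assoc]
        rw [← mul_assoc b, ← hba]

end Monoid

theorem npotent_algEquiv_trans_general {R : Type*} [Ring R] (n : ℕ) (hn : 2 ≤ n)
    (e f g : R) (he : e ^ n = e) (hg : g ^ n = g)
    (hef : ∃ a b : R, e = a * b ∧ f = b * a)
    (hfg : ∃ c d : R, f = c * d ∧ g = d * c) :
    ∃ s t : R, e = s * t ∧ g = t * s := by
  obtain ⟨m, rfl⟩ := Nat.exists_eq_add_of_le' hn
  obtain ⟨a, b, hab, hba⟩ := hef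
  obtain ⟨c, d, hcd, hdc⟩ := hfg
  exact ⟨_, _, eq_mul_and_eq_mul_of_pow_add_two_eq he hg hab hba hcd hdc⟩

/-- Algebraic equivalence is transitive on the set of `n`-potents of a ring `R`. -/
theorem npotent_algEquiv_trans {R : Type*} [Ring R] (n : ℕ) (hn : 2 ≤ n)
    (e f g : R) (he : e ^ n = e) (hf : f ^ n = f) (hg : g ^ n = g)
    (hef : ∃ a b : R, e = a * b ∧ f = b * a)
    (hfg : ∃ c d : R, f = c * d ∧ g = d * c) :
    ∃ s t : R, e = s * t ∧ g = t * s :=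
  npotent_algEquiv_trans_general n hn e f g he hg hef hfg
end

section
/- Let R be a unital ring, n ≥ 2, and let e and f be algebraically equivalent n-potents in R. Then the 2×2 matrices diag(e,0) and diag(f,0) are similar in the matrix ring M_2(R): there is an invertible 2×2 matrix z over R with z · diag(e,0) · z^{-1} = diag(f,0). -/
/-!
Put `e = ab`, `f = ba` and `n = m + 2`. The idempotents `p = e^(m+1)` and `q = f^(m+1)` are the
units of the corners `pRp` and `qRq`, in which `e` and `f` are invertible (`e⁻¹ = e^(2m+1)`).
Since `a f^k = e^k a`, the elements `x = a q ∈ pRq` and `y = b e^(2m+1) ∈ qRp` satisfy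
`xy = p` and `yx = q`, and `ye = fy`. As for idempotents, the matrix `[[y, 1-q], [1-p, x]]` is then
invertible with inverse `[[x, 1-p], [1-q, y]]`, and it intertwines `diag(e,0)` with `diag(f,0)`.
-/

open Matrix

section Monoid

variable {M : Type*} [Monoid M]

theorem pow_eq_pow_of_pow_add_two_eq_self {e : M} {m i j k : ℕ} (he : e ^ (m + 2) = e)
    (hj : 0 < j) (hij : i = j + k * (m + 1)) : e ^ i = e ^ j := by
  subst hij
  obtain ⟨j, rfl⟩ : ∃ j', j = j' + 1 := ⟨j - 1, by omega⟩
  induction k with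
  | zero => simp
  | succ k ih =>
    calc e ^ (j + 1 + (k + 1) * (m + 1)) = e ^ (j + k * (m + 1)) * e ^ (m + 2) := by
          rw [← pow_add]; congr 1; ring
      _ = e ^ (j + 1) := by rw [he, ← pow_succ, ← ih]; congr 1; ring

/-- `x` and `y` witness a Murray–von Neumann equivalence between `p` and `q`. -/
structure IsMvNPair (p q x y : M) : Prop where
  xy : x * y = p
  yx : y * x = q
  px : p * x = x
  xq : x * q = x
  qy : q * y = y
  yp : y * p = y

namespace IsMvNPair

variable {p q x y : M}

theorem isIdempotentElem_left (h : IsMvNPair p q x y) : IsIdempotentElem p := by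
  rw [IsIdempotentElem, ← h.xy, mul_assoc, ← mul_assoc y, h.yx, ← mul_assoc, h.xq]

theorem isIdempotentElem_right (h : IsMvNPair p q x y) : IsIdempotentElem q := by
  rw [IsIdempotentElem, ← h.yx, mul_assoc, ← mul_assoc x, h.xy, ← mul_assoc, h.yp]

end IsMvNPair

theorem isMvNPair_of_pow_add_two_eq_self {a b : M} {m : ℕ} (he : (a * b) ^ (m + 2) = a * b)
    (hf : (b * a) ^ (m + 2) = b * a) :
    IsMvNPair ((a * b) ^ (m + 1)) ((b * a) ^ (m + 1)) (a * (b * a) ^ (m + 1))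
      (b * (a * b) ^ (2 * m + 1)) where
  xy := by
    rw [← mul_pow_mul, mul_assoc, ← mul_assoc a, ← pow_succ', ← pow_add]
    exact pow_eq_pow_of_pow_add_two_eq_self he (k := 2) (by omega) (by omega)
  yx := by
    rw [← mul_pow_mul, mul_assoc, ← mul_assoc b, ← pow_succ', ← pow_add]
    exact pow_eq_pow_of_pow_add_two_eq_self hf (k := 2) (by omega) (by omega)
  px := by
    rw [← mul_pow_mul, ← mul_assoc, ← pow_add]
    exact congrArg (· * a) (pow_eq_pow_of_pow_add_two_eq_self he (k := 1) (by omega) (by omega))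
  xq := by
    rw [mul_assoc, ← pow_add]
    exact congrArg (a * ·) (pow_eq_pow_of_pow_add_two_eq_self hf (k := 1) (by omega) (by omega))
  qy := by
    rw [← mul_pow_mul, ← mul_assoc, ← pow_add]
    exact congrArg (· * b) (pow_eq_pow_of_pow_add_two_eq_self hf (k := 1) (by omega) (by omega))
  yp := by
    rw [mul_assoc, ← pow_add]
    exact congrArg (b * ·) (pow_eq_pow_of_pow_add_two_eq_self he (k := 1) (by omega) (by omega))

end Monoid

namespace IsMvNPair

variable {R : Type*} [Ring R] {p q x y : R}

def unit (h : IsMvNPair p q x y) : (Matrix (Fin 2) (Fin 2) R)ˣ where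
  val := !![y, 1 - q; 1 - p, x]
  inv := !![x, 1 - p; 1 - q, y]
  val_inv := by
    rw [mul_fin_two, one_fin_two]
    simp only [mul_sub, sub_mul, mul_one, one_mul, h.xy, h.yx, h.px, h.xq, h.qy, h.yp,
      h.isIdempotentElem_left.eq, h.isIdempotentElem_right.eq]
    congr <;> abel
  inv_val := by
    rw [mul_fin_two, one_fin_two]
    simp only [mul_sub, sub_mul, mul_one, one_mul, h.xy, h.yx, h.px, h.xq, h.qy, h.yp,
      h.isIdempotentElem_left.eq, h.isIdempotentElem_right.eq]
    congr <;> abel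

theorem unit_mul_diagonal_mul_inv (h : IsMvNPair p q x y) {e f : R} (hpe : p * e = e)
    (hfq : f * q = f) (hye : y * e = f * y) :
    h.unit.val * diagonal ![e, 0] * (h.unit⁻¹).val = diagonal ![f, 0] := by
  rw [Units.mul_inv_eq_iff_eq_mul]
  simp [unit, diagonal_fin_two, sub_mul, mul_sub, hpe, hfq, hye]

end IsMvNPair

/-- If `e` and `f` are algebraically equivalent `n`-potents in a unital ring `R`, then
`diag(e,0)` and `diag(f,0)` are similar in `M₂(R)`. -/
theorem npotent_algEquiv_stably_similar {R : Type*} [Ring R] (n : ℕ) (hn : 2 ≤ n)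
    (e f : R) (he : e ^ n = e) (hf : f ^ n = f)
    (h : ∃ a b : R, e = a * b ∧ f = b * a) :
    ∃ z : (Matrix (Fin 2) (Fin 2) R)ˣ,
      z.val * Matrix.diagonal ![e, 0] * (z⁻¹).val = Matrix.diagonal ![f, 0] := by
  obtain ⟨a, b, rfl, rfl⟩ := h
  obtain ⟨m, rfl⟩ : ∃ m, n = m + 2 := ⟨n - 2, by omega⟩
  have hmvn := isMvNPair_of_pow_add_two_eq_self he hf
  refine ⟨hmvn.unit, hmvn.unit_mul_diagonal_mul_inv ?_ ?_ ?_⟩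
  · rw [← pow_succ, he]
  · rw [← pow_succ', hf]
  · rw [mul_assoc, ← pow_succ, mul_assoc b a, ← mul_assoc a b, ← pow_succ']
end

section
/- Let R be a ring and n ≥ 2. For i = 1, 2, let e_i and f_i be n-potents in R with e_i algebraically equivalent to f_i. Suppose e_1 is orthogonal to e_2 and f_1 is orthogonal to f_2. Then e_1 + e_2 is algebraically equivalent to f_1 + f_2. -/
/-! If `e = ab` and `f = ba` are `n`-potents, then `e^(n-1)` and `f^(n-1)` are idempotents, and
the factors can be replaced by `a' = e^(n-1) a f^(n-1) ∈ eRf` and `b' = f^(n-1) b e^(n-1) ∈ fRe`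
with still `e = a'b'` and `f = b'a'`. For orthogonal pairs, the corner factors of the sum
`a₁' + a₂'`, `b₁' + b₂'` have vanishing cross products, so they factor `e₁ + e₂` and `f₁ + f₂`. -/

section Monoid

variable {M : Type*} [Monoid M]

theorem isIdempotentElem_pow_succ_of_pow_add_two_eq {e : M} {m : ℕ} (he : e ^ (m + 2) = e) :
    IsIdempotentElem (e ^ (m + 1)) := by
  rw [IsIdempotentElem, ← pow_add, show m + 1 + (m + 1) = m + 2 + m by ring, pow_add, he,
    ← pow_succ']

theorem corner_mul_corner_eq_mul_of_pow_add_two_eq {a b : M} {m : ℕ}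
    (he : (a * b) ^ (m + 2) = a * b) (hf : (b * a) ^ (m + 2) = b * a) :
    (a * b) ^ (m + 1) * a * (b * a) ^ (m + 1) * ((b * a) ^ (m + 1) * b * (a * b) ^ (m + 1)) =
      a * b := by
  have hsandwich : a * (b * a) ^ (m + 1) * b = (a * b) ^ (m + 2) := by
    rw [← mul_pow_mul, mul_assoc, ← pow_succ]
  calc _ = (a * b) ^ (m + 1) * (a * ((b * a) ^ (m + 1) * (b * a) ^ (m + 1)) * b) *
        (a * b) ^ (m + 1) := by simp only [mul_assoc]
    _ = (a * b) ^ (m + 1) * (a * b) * (a * b) ^ (m + 1) := by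
        rw [(isIdempotentElem_pow_succ_of_pow_add_two_eq hf).eq, hsandwich, he]
    _ = a * b := by rw [← pow_succ, he, ← pow_succ', he]

theorem exists_corner_factorization {n : ℕ} (hn : 2 ≤ n) {e f a b : M} (hab : e = a * b)
    (hba : f = b * a) (he : e ^ n = e) (hf : f ^ n = f) :
    ∃ x y : M, e = e * x * f * (f * y * e) ∧ f = f * y * e * (e * x * f) := by
  obtain ⟨m, rfl⟩ : ∃ m, n = m + 2 := ⟨n - 2, by omega⟩
  subst hab hba
  have hcorner : ∀ c d : M, c * d * ((c * d) ^ m * c * (d * c) ^ m) * (d * c) =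
      (c * d) ^ (m + 1) * c * (d * c) ^ (m + 1) := fun c d => by
    rw [pow_succ', pow_succ]
    simp only [mul_assoc]
  refine ⟨(a * b) ^ m * a * (b * a) ^ m, (b * a) ^ m * b * (a * b) ^ m, ?_, ?_⟩
  · rw [hcorner, hcorner, corner_mul_corner_eq_mul_of_pow_add_two_eq he hf]
  · rw [hcorner, hcorner, corner_mul_corner_eq_mul_of_pow_add_two_eq hf he]

end Monoid

theorem corner_add_mul_corner_add {R : Type*} [NonUnitalSemiring R]
    {e₁ e₂ f₁ f₂ x₁ x₂ y₁ y₂ : R} (hf : f₁ * f₂ = 0) (hf' : f₂ * f₁ = 0) :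
    (e₁ * x₁ * f₁ + e₂ * x₂ * f₂) * (f₁ * y₁ * e₁ + f₂ * y₂ * e₂) =
      e₁ * x₁ * f₁ * (f₁ * y₁ * e₁) + e₂ * x₂ * f₂ * (f₂ * y₂ * e₂) := by
  have hcross : ∀ {f f' u v w : R}, f * f' = 0 → u * f * (f' * v * w) = 0 :=
      @fun f f' u v w h => by
    rw [show u * f * (f' * v * w) = u * (f * f') * v * w by simp only [mul_assoc], h, mul_zero,
      zero_mul, zero_mul]
  rw [add_mul, mul_add, mul_add, hcross hf, hcross hf', add_zero, zero_add]

/-- If `e₁ ∼ₐ f₁` and `e₂ ∼ₐ f₂` are `n`-potents with `e₁ ⊥ e₂` and `f₁ ⊥ f₂`, then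
`e₁ + e₂` is algebraically equivalent to `f₁ + f₂`. -/
theorem npotent_algEquiv_add {R : Type*} [Ring R] (n : ℕ) (hn : 2 ≤ n)
    (e₁ e₂ f₁ f₂ : R)
    (he₁ : e₁ ^ n = e₁) (he₂ : e₂ ^ n = e₂) (hf₁ : f₁ ^ n = f₁) (hf₂ : f₂ ^ n = f₂)
    (h₁ : ∃ a b : R, e₁ = a * b ∧ f₁ = b * a)
    (h₂ : ∃ a b : R, e₂ = a * b ∧ f₂ = b * a)
    (he : e₁ * e₂ = 0) (he' : e₂ * e₁ = 0)
    (hf : f₁ * f₂ = 0) (hf' : f₂ * f₁ = 0) :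
    ∃ a b : R, e₁ + e₂ = a * b ∧ f₁ + f₂ = b * a := by
  obtain ⟨a₁, b₁, hab₁, hba₁⟩ := h₁
  obtain ⟨a₂, b₂, hab₂, hba₂⟩ := h₂
  obtain ⟨x₁, y₁, he₁', hf₁'⟩ := exists_corner_factorization hn hab₁ hba₁ he₁ hf₁
  obtain ⟨x₂, y₂, he₂', hf₂'⟩ := exists_corner_factorization hn hab₂ hba₂ he₂ hf₂
  refine ⟨e₁ * x₁ * f₁ + e₂ * x₂ * f₂, f₁ * y₁ * e₁ + f₂ * y₂ * e₂, ?_, ?_⟩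
  · rw [corner_add_mul_corner_add hf hf', ← he₁', ← he₂']
  · rw [corner_add_mul_corner_add he he', ← hf₁', ← hf₂']
end

section
/- Let R be a ring, n ≥ 2, and let e and f be orthogonal n-potents in R. Then in the matrix ring M_2(R), the matrix diag(e,f) is algebraically equivalent to diag(e+f, 0). -/
/-!
If `e ^ n = e` with `n ≥ 2`, then `u = e ^ (n - 1)` satisfies `u e = e u = e` and `u y = 0`
whenever `e y = 0`; likewise `v = f ^ (n - 1)` for `f`. So for the column `a = (u, v)ᵀ` and the
row `b = (e, f)`, orthogonality gives `a b = diag(e, f)`, while `b a = e u + f v = e + f`.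
-/

open Matrix

section TwoByTwo

variable {R : Type*} [NonUnitalNonAssocSemiring R]

theorem diagonal_eq_col_mul_row {e f u v : R} (hue : u * e = e) (huf : u * f = 0)
    (hve : v * e = 0) (hvf : v * f = f) :
    diagonal ![e, f] = !![u, 0; v, 0] * !![e, f; 0, 0] := by
  ext i j
  fin_cases i <;> fin_cases j <;> simp [hue, huf, hve, hvf]

theorem diagonal_add_eq_row_mul_col {e f u v : R} (heu : e * u = e) (hfv : f * v = f) :
    diagonal ![e + f, 0] = !![e, f; 0, 0] * !![u, 0; v, 0] := by
  ext i j
  fin_cases i <;> fin_cases j <;> simp [heu, hfv]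

end TwoByTwo

section Npotent

variable {M : Type*} [Monoid M] {n : ℕ} {x : M}

theorem pow_pred_mul_of_pow_eq_self (hn : n ≠ 0) (hx : x ^ n = x) : x ^ (n - 1) * x = x := by
  rw [pow_sub_one_mul hn, hx]

theorem mul_pow_pred_of_pow_eq_self (hn : n ≠ 0) (hx : x ^ n = x) : x * x ^ (n - 1) = x := by
  rw [mul_pow_sub_one hn, hx]

end Npotent

theorem pow_pred_mul_eq_zero {M₀ : Type*} [MonoidWithZero M₀] {n : ℕ} {x y : M₀} (hn : 2 ≤ n)
    (hxy : x * y = 0) : x ^ (n - 1) * y = 0 :=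
  pow_mul_eq_zero_of_le (m := 1) (by omega) (by rwa [pow_one])

/-- For orthogonal `n`-potents `e` and `f` in a ring `R`,
`diag(e,f)` is algebraically equivalent to `diag(e+f,0)` in `M₂(R)`. -/
theorem npotent_diag_add_algEquiv {R : Type*} [Ring R] (n : ℕ) (hn : 2 ≤ n)
    (e f : R) (he : e ^ n = e) (hf : f ^ n = f)
    (hef : e * f = 0) (hfe : f * e = 0) :
    ∃ a b : Matrix (Fin 2) (Fin 2) R,
      Matrix.diagonal ![e, f] = a * b ∧ Matrix.diagonal ![e + f, 0] = b * a := by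
  have hn₀ : n ≠ 0 := by omega
  exact ⟨!![e ^ (n - 1), 0; f ^ (n - 1), 0], !![e, f; 0, 0],
    diagonal_eq_col_mul_row (pow_pred_mul_of_pow_eq_self hn₀ he) (pow_pred_mul_eq_zero hn hef)
      (pow_pred_mul_eq_zero hn hfe) (pow_pred_mul_of_pow_eq_self hn₀ hf),
    diagonal_add_eq_row_mul_col (mul_pow_pred_of_pow_eq_self hn₀ he)
      (mul_pow_pred_of_pow_eq_self hn₀ hf)⟩
end

section
/- Let n ≥ 2, let F be a field of characteristic zero containing a primitive (n−1)-th root of unity ζ, and let A be a unital associative F-algebra. Set ω_k = ζ^{k-1} for 1 ≤ k ≤ n−1. Then for every n-potent e in A there exists a unique n-tuple (e_0, e_1, …, e_{n-1}) of idempotents in A such that e_0 + e_1 + ⋯ + e_{n-1} = 1, the e_j are pairwise orthogonal (e_j e_k = 0 for j ≠ k), and e = Σ_{k=1}^{n-1} ω_k e_k. -/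
/-!
The polynomial `X ^ n - X = X * ∏ k < n - 1, (X - ζ ^ k)` annihilates `e` and has the `n`
distinct roots `0, 1, ζ, …, ζ ^ (n - 2)`. Evaluating the Lagrange basis polynomials of these
nodes at `e` gives the `e_k`: each identity of a partition of unity holds for the Lagrange basis
at every node, hence modulo the nodal polynomial, hence after evaluation at `e`. Conversely, any
partition of unity with `e = ∑ λ_k e_k`, `λ_k` the nodes, satisfies `p(e) = ∑ p(λ_k) e_k` for
every polynomial `p`, so evaluating the Lagrange basis at `e` recovers each `e_k`.
-/

open Polynomial Finset Lagrange

theorem OrthogonalIdempotents.sum_smul_mul_sum_smul {ι R A : Type*} [CommSemiring R] [Semiring A]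
    [Algebra R A] [Fintype ι] {E : ι → A} (hE : OrthogonalIdempotents E) (c d : ι → R) :
    (∑ i, c i • E i) * ∑ i, d i • E i = ∑ i, (c i * d i) • E i := by
  classical
  simp [Finset.sum_mul, Finset.mul_sum, hE.mul_eq, smul_smul, mul_comm]

theorem CompleteOrthogonalIdempotents.aeval_sum_smul {ι R A : Type*} [CommSemiring R] [Semiring A]
    [Algebra R A] [Fintype ι] {E : ι → A} (hE : CompleteOrthogonalIdempotents E) (v : ι → R)
    (p : R[X]) : aeval (∑ i, v i • E i) p = ∑ i, p.eval (v i) • E i := by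
  induction p using Polynomial.induction_on with
  | C a => simp [Algebra.algebraMap_eq_smul_one, ← Finset.smul_sum, hE.complete]
  | add p q hp hq => simp only [map_add, hp, hq, eval_add, add_smul, Finset.sum_add_distrib]
  | monomial k a ih =>
    rw [pow_succ, ← mul_assoc, map_mul, ih, aeval_X, hE.sum_smul_mul_sum_smul]
    simp only [eval_mul, eval_X]

namespace Lagrange

variable {F A ι : Type*} [Field F] [Ring A] [Algebra F A] [Fintype ι] {v : ι → F} {e : A}

theorem aeval_eq_of_eval_nodes_eq (hv : Function.Injective v) (he : aeval e (nodal univ v) = 0)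
    {p q : F[X]} (h : ∀ i, p.eval (v i) = q.eval (v i)) : aeval e p = aeval e q := by
  obtain ⟨r, hr⟩ : nodal univ v ∣ p - q := by
    rw [nodal_eq]
    refine Finset.prod_dvd_of_coprime ((pairwise_coprime_X_sub_C hv).set_pairwise _)
      fun i _ => dvd_iff_isRoot.mpr ?_
    simp [h i]
  rw [← sub_eq_zero, ← map_sub, hr, map_mul, he, zero_mul]

variable [DecidableEq ι]

theorem eval_basis_univ (hv : Function.Injective v) (i j : ι) :
    (Lagrange.basis univ v i).eval (v j) = if i = j then 1 else 0 := by
  split_ifs with hij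
  · exact hij ▸ eval_basis_self hv.injOn (mem_univ i)
  · exact eval_basis_of_ne hij (mem_univ j)

theorem completeOrthogonalIdempotents_aeval_basis (hv : Function.Injective v)
    (he : aeval e (nodal univ v) = 0) :
    CompleteOrthogonalIdempotents fun i => aeval e (Lagrange.basis univ v i) := by
  refine ⟨OrthogonalIdempotents.iff_mul_eq.mpr fun i j => ?_, ?_⟩
  · rw [← map_mul, ← map_zero (aeval (R := F) e), ← apply_ite]
    refine aeval_eq_of_eval_nodes_eq hv he fun k => ?_
    simp only [eval_mul, apply_ite (eval (v k)), eval_zero, eval_basis_univ hv]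
    split_ifs <;> simp_all
  · rw [← map_sum, ← map_one (aeval (R := F) e)]
    refine aeval_eq_of_eval_nodes_eq hv he fun k => ?_
    simp [eval_finsetSum, eval_basis_univ hv]

theorem sum_smul_aeval_basis (hv : Function.Injective v)
    (he : aeval e (nodal univ v) = 0) : ∑ i, v i • aeval e (Lagrange.basis univ v i) = e := by
  conv_rhs => rw [← aeval_X (R := F) e]
  simp only [← map_smul, ← map_sum]
  refine aeval_eq_of_eval_nodes_eq hv he fun k => ?_
  simp [eval_finsetSum, eval_basis_univ hv]

theorem existsUnique_completeOrthogonalIdempotents (hv : Function.Injective v)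
    (he : aeval e (nodal univ v) = 0) :
    ∃! E : ι → A, CompleteOrthogonalIdempotents E ∧ e = ∑ i, v i • E i := by
  refine ⟨_, ⟨completeOrthogonalIdempotents_aeval_basis hv he,
    (sum_smul_aeval_basis hv he).symm⟩, fun E ⟨hE, hsum⟩ => funext fun j => ?_⟩
  rw [hsum, hE.aeval_sum_smul]
  simp [eval_basis_univ hv]

end Lagrange

def powersWithZero {M : Type*} [MonoidWithZero M] (ζ : M) (m : ℕ) : Fin (m + 1) → M :=
  Fin.cons 0 fun k : Fin m => ζ ^ (k : ℕ)

theorem sum_powersWithZero_smul {R M : Type*} [Semiring R] [AddCommMonoid M] [Module R M] (ζ : R)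
    {m : ℕ} (E : Fin (m + 1) → M) :
    ∑ i, powersWithZero ζ m i • E i = ∑ k : Fin m, ζ ^ (k : ℕ) • E k.succ := by
  simp [powersWithZero, Fin.sum_univ_succ]

namespace IsPrimitiveRoot

variable {R : Type*} [CommRing R] [IsDomain R] {m : ℕ} {ζ : R}

theorem injective_powersWithZero (hζ : IsPrimitiveRoot ζ m) (hm : 0 < m) :
    Function.Injective (powersWithZero ζ m) := by
  refine Fin.cons_injective_iff.mpr ⟨?_, fun k l h => Fin.ext (hζ.pow_inj k.isLt l.isLt h)⟩
  rintro ⟨k, hk⟩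
  exact pow_ne_zero _ (hζ.ne_zero hm.ne') hk

theorem nodal_powersWithZero (hζ : IsPrimitiveRoot ζ m) (hm : 0 < m) :
    nodal univ (powersWithZero ζ m) = X ^ (m + 1) - X := by
  have hprod := X_pow_sub_C_eq_prod hζ hm (one_pow m)
  simp only [mul_one, map_one] at hprod
  rw [nodal_eq, Fin.prod_univ_succ, pow_succ', ← mul_sub_one, hprod,
    ← Fin.prod_univ_eq_prod_range (fun k => X - C (ζ ^ k))]
  simp [powersWithZero]

end IsPrimitiveRoot

/-- Let `F` be a field of characteristic zero containing a primitive `(n-1)`-th root of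
unity `ζ` (`n ≥ 2`), and let `A` be a unital `F`-algebra.  Every `n`-potent `e` in `A`
admits a unique `n`-partition of unity `(e₀, e₁, …, e_{n-1})` (pairwise orthogonal
idempotents summing to `1`) with `e = ∑_{k=1}^{n-1} ζ^{k-1} • e_k`. -/
theorem npotent_partition_of_unity {F : Type*} [Field F]
    {A : Type*} [Ring A] [Algebra F A] (n : ℕ) (hn : 2 ≤ n)
    (ζ : F) (hζ : IsPrimitiveRoot ζ (n - 1))
    (e : A) (he : e ^ n = e) :
    ∃! E : Fin n → A,
      (∀ k, E k * E k = E k) ∧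
      (∑ k, E k = 1) ∧
      (∀ j k, j ≠ k → E j * E k = 0) ∧
      e = ∑ k : Fin (n - 1), ζ ^ (k : ℕ) • E ⟨(k : ℕ) + 1, by have := k.isLt; omega⟩ := by
  obtain ⟨m, rfl⟩ : ∃ m, n = m + 1 := ⟨n - 1, by omega⟩
  rw [Nat.add_sub_cancel] at hζ
  have hm : 0 < m := by omega
  have hnodal : aeval e (nodal univ (powersWithZero ζ m)) = 0 := by
    simp [hζ.nodal_powersWithZero hm, he]
  refine (existsUnique_congr fun E => ?_).mp
    (existsUnique_completeOrthogonalIdempotents (hζ.injective_powersWithZero hm) hnodal)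
  simp only [completeOrthogonalIdempotents_iff, orthogonalIdempotents_iff, IsIdempotentElem,
    Pairwise, sum_powersWithZero_smul]
  tauto
end

section
/- Let A be a unital complex Banach algebra and n ≥ 2. Suppose t ↦ e_t is a norm-continuous path, defined for t in [0,1], of n-potents in A (i.e. e_t^n = e_t for all t). Then e_0 is similar to e_1: there is an invertible z in A with z e_0 z^{-1} = e_1. -/
/-!
For `n`-potents `e` and `f` the element
`Z(f, e) = ∑_{k=1}^{n-1} f^k e^{n-k} + (1 - f^{n-1})(1 - e^{n-1})`
satisfies `Z(f, e) e = f Z(f, e)`, and `Z(e, e) = (n - 1) e + (1 - e^{n-1})` is invertible.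
By continuity of `Z` and openness of the group of units, `Z(e_s, e_t)` is invertible for `s`
near `t`, so similarity classes along the path are open; connectedness of `[0, 1]` finishes
the proof.
-/

open Filter Topology Finset

section Monoid

variable {M : Type*} [Monoid M] {e : M} {n : ℕ}

theorem pow_add_pred_of_pow_eq_self (he : e ^ n = e) {a : ℕ} (ha : 1 ≤ a) :
    e ^ (a + (n - 1)) = e ^ a := by
  obtain _ | n := n
  · simp
  obtain ⟨b, rfl⟩ := Nat.exists_eq_add_of_le' ha
  rw [Nat.add_sub_cancel, add_assoc, add_comm 1, pow_add, he, pow_succ]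

theorem isIdempotentElem_pow_pred_of_pow_eq_self (he : e ^ n = e) :
    IsIdempotentElem (e ^ (n - 1)) := by
  rcases Nat.eq_zero_or_pos (n - 1) with h | h
  · simp [h, IsIdempotentElem]
  · rw [IsIdempotentElem, ← pow_add, pow_add_pred_of_pow_eq_self he h]

end Monoid

section Ring

variable {A : Type*} [Ring A]

/-- For `n = 2` this is the classical intertwiner `f e + (1 - f) (1 - e)` of two idempotents. -/
def npotentIntertwiner (n : ℕ) (f e : A) : A :=
  ∑ k ∈ range (n - 1), f ^ (k + 1) * e ^ (n - 1 - k) + (1 - f ^ (n - 1)) * (1 - e ^ (n - 1))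

theorem semiconjBy_npotentIntertwiner {n : ℕ} {e f : A} (he : e ^ n = e) (hf : f ^ n = f) :
    SemiconjBy (npotentIntertwiner n f e) e f := by
  rcases Nat.lt_or_ge n 2 with hn | hn
  · simp [SemiconjBy, npotentIntertwiner, show n - 1 = 0 by omega]
  obtain ⟨m, rfl⟩ := Nat.exists_eq_add_of_le' hn
  simp only [SemiconjBy, npotentIntertwiner, show m + 2 - 1 = m + 1 from rfl, add_mul, mul_add]
  set F : ℕ → A := fun k => f ^ (k + 1) * e ^ (m + 2 - k)
  have hsum_e : (∑ k ∈ range (m + 1), f ^ (k + 1) * e ^ (m + 1 - k)) * e =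
      ∑ k ∈ range (m + 1), F k := by
    rw [sum_mul]
    refine sum_congr rfl fun k hk => ?_
    rw [mul_assoc, ← pow_succ, show m + 1 - k + 1 = m + 2 - k by grind]
  have hf_sum : f * ∑ k ∈ range (m + 1), f ^ (k + 1) * e ^ (m + 1 - k) =
      ∑ k ∈ range (m + 1), F (k + 1) := by
    rw [mul_sum]
    refine sum_congr rfl fun k _ => ?_
    rw [← mul_assoc, ← pow_succ', show m + 1 - k = m + 2 - (k + 1) by omega]
  -- The two sums differ only by the end terms `F 0 = f e^n` and `F (m + 1) = f^n e`.
  have hshift : ∑ k ∈ range (m + 1), F k = ∑ k ∈ range (m + 1), F (k + 1) := by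
    rw [sum_range_succ', sum_range_succ]
    simp only [F, zero_add, pow_one, Nat.sub_zero, he, hf, show m + 2 - (m + 1) = 1 by omega]
  have he_corner : (1 - e ^ (m + 1)) * e = 0 := by
    rw [sub_mul, one_mul, ← pow_succ, he, sub_self]
  have hf_corner : f * (1 - f ^ (m + 1)) = 0 := by
    rw [mul_sub, mul_one, ← pow_succ', hf, sub_self]
  rw [hsum_e, hf_sum, hshift, mul_assoc, he_corner, ← mul_assoc, hf_corner, mul_zero, zero_mul]

theorem npotentIntertwiner_self {n : ℕ} {e : A} (he : e ^ n = e) :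
    npotentIntertwiner n e e = (n - 1) • e + (1 - e ^ (n - 1)) := by
  have hterm : ∀ k ∈ range (n - 1), e ^ (k + 1) * e ^ (n - 1 - k) = e := fun k hk => by
    rw [← pow_add, show k + 1 + (n - 1 - k) = n by grind, he]
  rw [npotentIntertwiner, sum_congr rfl hterm, sum_const, card_range,
    (isIdempotentElem_pow_pred_of_pow_eq_self he).one_sub.eq]

theorem isUnit_npotentIntertwiner_self (K : Type*) [Field K] [CharZero K] [Algebra K A]
    {n : ℕ} (hn : 2 ≤ n) {e : A} (he : e ^ n = e) : IsUnit (npotentIntertwiner n e e) := by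
  obtain ⟨j, rfl⟩ := Nat.exists_eq_add_of_le' hn
  have hpow (a : ℕ) (ha : 1 ≤ a) : e ^ (a + (j + 1)) = e ^ a :=
    pow_add_pred_of_pow_eq_self he ha
  rw [npotentIntertwiner_self he, show j + 2 - 1 = j + 1 from rfl, ← Nat.cast_smul_eq_nsmul K]
  set r := 1 - e ^ (j + 1)
  -- `q` inverts `e` on the corner cut out by the idempotent `e ^ (j + 1)`.
  set q := e ^ (2 * j + 1)
  have hr : IsIdempotentElem r := (isIdempotentElem_pow_pred_of_pow_eq_self he).one_sub
  have her : e * r = 0 := by rw [mul_sub, mul_one, ← pow_succ', he, sub_self]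
  have hre : r * e = 0 := by rw [sub_mul, one_mul, ← pow_succ, he, sub_self]
  have hqr : q * r = 0 := by rw [mul_sub, mul_one, ← pow_add, hpow _ (by omega), sub_self]
  have hrq : r * q = 0 := by
    rw [sub_mul, one_mul, ← pow_add, add_comm, hpow _ (by omega), sub_self]
  have heq : e * q = 1 - r := by
    rw [sub_sub_cancel, ← pow_succ', show 2 * j + 1 + 1 = j + 1 + (j + 1) by ring,
      hpow _ le_add_self]
  have hqe : q * e = 1 - r := by
    rw [sub_sub_cancel, ← pow_succ, show 2 * j + 1 + 1 = j + 1 + (j + 1) by ring,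
      hpow _ le_add_self]
  have hc : ((j + 1 : ℕ) : K) ≠ 0 := Nat.cast_ne_zero.2 j.succ_ne_zero
  refine ⟨⟨_, ((j + 1 : ℕ) : K)⁻¹ • q + r, ?_, ?_⟩, rfl⟩ <;>
    simp only [add_mul, mul_add, smul_mul_assoc, mul_smul_comm, smul_smul, her, hre, hqr, hrq, heq,
      hqe, hr.eq, smul_zero, mul_inv_cancel₀ hc, inv_mul_cancel₀ hc, one_smul, zero_add, add_zero,
      sub_add_cancel]

theorem continuous_npotentIntertwiner_left [TopologicalSpace A] [IsTopologicalRing A] (n : ℕ)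
    (e : A) : Continuous fun f : A => npotentIntertwiner n f e := by
  unfold npotentIntertwiner
  fun_prop

end Ring

section Path

variable {A : Type*} [NormedRing A] [HasSummableGeomSeries A] {X : Type*} [TopologicalSpace X]
  {n : ℕ} {e : X → A} {s : Set X}

theorem eventually_isConj_of_continuousWithinAt (K : Type*) [Field K] [CharZero K] [Algebra K A]
    (hn : 2 ≤ n) {x : X} (hx : x ∈ s) (hcont : ContinuousWithinAt e s x)
    (hpot : ∀ y ∈ s, e y ^ n = e y) :
    ∀ᶠ y in 𝓝[s] x, IsConj (e x) (e y) := by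
  have hZ : ContinuousWithinAt (fun y => npotentIntertwiner n (e y) (e x)) s x :=
    (continuous_npotentIntertwiner_left n (e x)).continuousAt.comp_continuousWithinAt hcont
  filter_upwards [hZ (Units.isOpen.mem_nhds (isUnit_npotentIntertwiner_self K hn (hpot x hx))),
    self_mem_nhdsWithin] with y hunit hy
  exact ⟨hunit.unit, semiconjBy_npotentIntertwiner (hpot x hx) (hpot y hy)⟩

theorem IsPreconnected.isConj_of_continuousOn_of_pow_eq_self (hs : IsPreconnected s) (K : Type*)
    [Field K] [CharZero K] [Algebra K A] (hn : 2 ≤ n) (hcont : ContinuousOn e s)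
    (hpot : ∀ y ∈ s, e y ^ n = e y) {x y : X} (hx : x ∈ s) (hy : y ∈ s) : IsConj (e x) (e y) :=
  hs.induction₂ (fun x y => IsConj (e x) (e y))
    (fun x hx => eventually_isConj_of_continuousWithinAt K hn hx (hcont x hx) hpot)
    (fun _ _ _ _ _ _ => IsConj.trans) (fun _ _ _ _ => IsConj.symm) hx hy

end Path

/-- If `t ↦ e t` is a norm-continuous path of `n`-potents in a unital complex Banach
algebra `A`, defined on `[0,1]`, then `e 0` is similar to `e 1`. -/
theorem npotent_homotopy_implies_similar {A : Type*} [NormedRing A] [NormedAlgebra ℂ A]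
    [CompleteSpace A] (n : ℕ) (hn : 2 ≤ n)
    (e : ℝ → A) (hcont : ContinuousOn e (Set.Icc 0 1))
    (hpot : ∀ t ∈ Set.Icc (0 : ℝ) 1, (e t) ^ n = e t) :
    ∃ z : Aˣ, z.val * e 0 * (z⁻¹).val = e 1 := by
  obtain ⟨z, hz⟩ := isPreconnected_Icc.isConj_of_continuousOn_of_pow_eq_self ℂ hn hcont hpot
    (Set.left_mem_Icc.2 zero_le_one) (Set.right_mem_Icc.2 zero_le_one)
  exact ⟨z, (Units.mul_inv_eq_iff_eq_mul z).2 hz⟩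
end

section
/- Let A be a unital complex Banach algebra, n ≥ 2, and let e and f be similar n-potents in A. Then there is a norm-continuous path t ↦ E_t, t in [0,1], of n-potents in the matrix algebra M_2(A) with E_0 = diag(e,0) and E_1 = diag(f,0); that is, diag(e,0) and diag(f,0) are homotopic through n-potents in M_2(A). -/
open Matrix

/-!
The Whitehead identity writes `diag(z, z⁻¹)` as a product of six elementary matrices
`[1 a; 0 1]` and `[1 0; a 1]`. Each of these is joined to `1` in `GL₂(A)` by scaling `a` to `0`,
so `diag(z, z⁻¹)` lies in the identity path component of `GL₂(A)`. Conjugating `diag(e, 0)` along a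
path from `1` to `diag(z, z⁻¹)` gives a path of `n`-potents ending at `diag(z e z⁻¹, 0)`.
-/

namespace Matrix

variable {A : Type*} [Ring A]

def elemUpper (a : A) : (Matrix (Fin 2) (Fin 2) A)ˣ where
  val := !![1, a; 0, 1]
  inv := !![1, -a; 0, 1]
  val_inv := by simp [one_fin_two]
  inv_val := by simp [one_fin_two]

def elemLower (a : A) : (Matrix (Fin 2) (Fin 2) A)ˣ where
  val := !![1, 0; a, 1]
  inv := !![1, 0; -a, 1]
  val_inv := by simp [one_fin_two]
  inv_val := by simp [one_fin_two]

def diagUnit (z : Aˣ) : (Matrix (Fin 2) (Fin 2) A)ˣ where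
  val := diagonal ![(z : A), ↑z⁻¹]
  inv := diagonal ![↑z⁻¹, (z : A)]
  val_inv := by simp [diagonal_fin_two, one_fin_two]
  inv_val := by simp [diagonal_fin_two, one_fin_two]

theorem elemUpper_zero : elemUpper (0 : A) = 1 := by
  ext : 1; simp [elemUpper, one_fin_two]

theorem elemLower_zero : elemLower (0 : A) = 1 := by
  ext : 1; simp [elemLower, one_fin_two]

/-- The first three factors give `[0 z; -z⁻¹ 0]`, the last three `[0 -1; 1 0]`. -/
theorem whitehead_identity (z : Aˣ) :
    elemUpper (z : A) * elemLower (-(↑z⁻¹ : A)) * elemUpper (z : A) *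
      (elemUpper (-1) * elemLower 1 * elemUpper (-1)) = diagUnit z := by
  ext : 1
  simp [Units.val_mul, elemUpper, elemLower, diagUnit, diagonal_fin_two]

theorem diagUnit_conj_diagonal (z : Aˣ) (e : A) :
    (diagUnit z).val * diagonal ![e, 0] * (diagUnit z)⁻¹.val =
      diagonal ![z.val * e * z⁻¹.val, 0] := by
  simp only [diagUnit, Units.inv_mk, diagonal_mul_diagonal]
  congr 1
  ext i
  fin_cases i <;> simp

variable [TopologicalSpace A] [IsTopologicalRing A]

theorem continuous_elemUpper : Continuous (elemUpper : A → _) := by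
  refine Units.continuous_iff.2 ⟨?_, ?_⟩ <;>
    refine continuous_matrix fun i j => ?_ <;> fin_cases i <;> fin_cases j <;>
    simp [elemUpper] <;> fun_prop

theorem continuous_elemLower : Continuous (elemLower : A → _) := by
  refine Units.continuous_iff.2 ⟨?_, ?_⟩ <;>
    refine continuous_matrix fun i j => ?_ <;> fin_cases i <;> fin_cases j <;>
    simp [elemLower] <;> fun_prop

variable [PathConnectedSpace A]

theorem joined_one_elemUpper (a : A) : Joined 1 (elemUpper a) := by
  simpa [elemUpper_zero] using (PathConnectedSpace.joined 0 a).map continuous_elemUpper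

theorem joined_one_elemLower (a : A) : Joined 1 (elemLower a) := by
  simpa [elemLower_zero] using (PathConnectedSpace.joined 0 a).map continuous_elemLower

theorem joined_one_diagUnit (z : Aˣ) : Joined 1 (diagUnit z) := by
  rw [← whitehead_identity]
  simpa only [mul_one] using
    (((joined_one_elemUpper _).mul (joined_one_elemLower _)).mul (joined_one_elemUpper _)).mul
      (((joined_one_elemUpper _).mul (joined_one_elemLower _)).mul (joined_one_elemUpper _))

end Matrix

theorem Joined.exists_path_pow_eq_self_conj {R : Type*} [Monoid R] [TopologicalSpace R]
    [ContinuousMul R] {u : Rˣ} (hu : Joined 1 u) {p : R} {n : ℕ} (hp : p ^ n = p) :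
    ∃ E : ℝ → R, Continuous E ∧ (∀ t, E t ^ n = E t) ∧ E 0 = p ∧ E 1 = ↑u * p * ↑u⁻¹ := by
  refine ⟨fun t => ↑(hu.somePath.extend t) * p * ↑(hu.somePath.extend t)⁻¹, by fun_prop,
    fun t => ?_, by simp, by simp⟩
  rw [Units.conj_pow, hp]

theorem npotent_similar_implies_stably_homotopic_general {A : Type*} [NormedRing A]
    [NormedAlgebra ℂ A] (n : ℕ) (hn : 2 ≤ n)
    (e f : A) (he : e ^ n = e)
    (hs : ∃ z : Aˣ, z.val * e * (z⁻¹).val = f) :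
    ∃ E : ℝ → Matrix (Fin 2) (Fin 2) A,
      ContinuousOn E (Set.Icc 0 1) ∧
      (∀ t ∈ Set.Icc (0 : ℝ) 1, (E t) ^ n = E t) ∧
      E 0 = Matrix.diagonal ![e, 0] ∧ E 1 = Matrix.diagonal ![f, 0] := by
  obtain ⟨z, rfl⟩ := hs
  have hD : diagonal ![e, 0] ^ n = diagonal ![e, 0] := by
    rw [diagonal_pow]
    congr 1
    ext i
    fin_cases i <;> simp [he, zero_pow (by omega : n ≠ 0)]
  obtain ⟨E, hE, hpow, h0, h1⟩ := (joined_one_diagUnit z).exists_path_pow_eq_self_conj hD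
  exact ⟨E, hE.continuousOn, fun t _ => hpow t, h0, h1.trans (diagUnit_conj_diagonal z e)⟩

/-- If `e` and `f` are similar `n`-potents in a unital complex Banach algebra `A`, then
`diag(e,0)` and `diag(f,0)` are homotopic through `n`-potents in `M₂(A)`: there is a
continuous path `t ↦ E t`, `t ∈ [0,1]`, of `n`-potents in `M₂(A)` with
`E 0 = diag(e,0)` and `E 1 = diag(f,0)`. -/
theorem npotent_similar_implies_stably_homotopic {A : Type*} [NormedRing A]
    [NormedAlgebra ℂ A] [CompleteSpace A] (n : ℕ) (hn : 2 ≤ n)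
    (e f : A) (he : e ^ n = e) (hf : f ^ n = f)
    (hs : ∃ z : Aˣ, z.val * e * (z⁻¹).val = f) :
    ∃ E : ℝ → Matrix (Fin 2) (Fin 2) A,
      ContinuousOn E (Set.Icc 0 1) ∧
      (∀ t ∈ Set.Icc (0 : ℝ) 1, (E t) ^ n = E t) ∧
      E 0 = Matrix.diagonal ![e, 0] ∧ E 1 = Matrix.diagonal ![f, 0] :=
  npotent_similar_implies_stably_homotopic_general n hn e f he hs
end

section
/- Let A be a unital C*-algebra, n ≥ 3, and let e be an element of A. Then e is a normal n-potent (i.e. e^n = e and e*e = ee*) if and only if e is a partial isometry satisfying e = e e* e and e* = e^{n-2}. -/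
/-!
A normal `n`-potent `e` has spectrum inside `{z | z ^ n = z}`, i.e. `0` together with
`(n - 1)`-th roots of unity. On that set `conj z = z ^ (n - 2)` (for a root of unity
`conj z = z⁻¹`), so the continuous functional calculus gives `star e = e ^ (n - 2)`, and
then `e * star e * e = e ^ n = e`. Conversely `star e = e ^ (n - 2)` makes `e` normal, and the
partial isometry identity reads `e ^ n = e`.
-/

theorem Complex.star_eq_pow_of_pow_eq_self {n : ℕ} (hn : 3 ≤ n) {z : ℂ} (hz : z ^ n = z) :
    star z = z ^ (n - 2) := by
  rcases eq_or_ne z 0 with rfl | hz0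
  · simp [zero_pow (by omega : n - 2 ≠ 0)]
  have hroot : z ^ (n - 1) = 1 := by
    apply mul_right_cancel₀ hz0
    rw [← pow_succ, Nat.sub_add_cancel (by omega), hz, one_mul]
  have hinv : z⁻¹ = z ^ (n - 2) :=
    inv_eq_of_mul_eq_one_right <| by rw [← pow_succ', ← hroot]; congr 1; omega
  rw [← hinv, Complex.inv_eq_conj (Complex.norm_eq_one_of_pow_eq_one hroot (by omega))]
  rfl

theorem star_eq_pow_of_pow_eq_self {A : Type*} [CStarAlgebra A] {e : A} [IsStarNormal e]
    {n : ℕ} (hn : 3 ≤ n) (he : e ^ n = e) : star e = e ^ (n - 2) := by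
  have hspec : (spectrum ℂ e).EqOn (· ^ n) id := by
    rwa [← cfc_eq_cfc_iff_eqOn (a := e), cfc_pow_id e n, cfc_id ℂ e]
  rw [← cfc_star_id e (R := ℂ), ← cfc_pow_id e (n - 2) (R := ℂ)]
  exact cfc_congr fun z hz ↦ Complex.star_eq_pow_of_pow_eq_self hn (hspec hz)

theorem mul_star_mul_eq_pow_of_star_eq_pow {M : Type*} [Monoid M] [Star M] {e : M} {k : ℕ}
    (h : star e = e ^ k) : e * star e * e = e ^ (k + 2) := by
  rw [h, ← pow_succ', ← pow_succ]

/-- In a unital C*-algebra `A` with `n ≥ 3`, an element `e` is a normal `n`-potent if and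
only if `e` is a partial isometry with `e = e e* e` and `e* = e^(n-2)`. -/
theorem normal_npotent_iff_partial_isometry {A : Type*} [NormedRing A] [StarRing A]
    [CStarRing A] [NormedAlgebra ℂ A] [CompleteSpace A] [StarModule ℂ A]
    (n : ℕ) (hn : 3 ≤ n) (e : A) :
    (e ^ n = e ∧ star e * e = e * star e) ↔
      (e = e * star e * e ∧ star e = e ^ (n - 2)) := by
  let _ : CStarAlgebra A := ⟨⟩
  have hn2 : n - 2 + 2 = n := by omega
  constructor
  · rintro ⟨hpow, hnormal⟩
    have : IsStarNormal e := ⟨(commute_iff_eq _ _).mpr hnormal⟩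
    have hstar := star_eq_pow_of_pow_eq_self hn hpow
    exact ⟨by rw [mul_star_mul_eq_pow_of_star_eq_pow hstar, hn2, hpow], hstar⟩
  · rintro ⟨hpi, hstar⟩
    refine ⟨by rw [← hn2, ← mul_star_mul_eq_pow_of_star_eq_pow hstar, ← hpi], ?_⟩
    rw [hstar]
    exact (Commute.self_pow e _).symm.eq
end

section
/- Let A be a unital C*-algebra and n ≥ 2. Then every n-potent in A is similar to a normal n-potent: for each e in A with e^n = e there exist an invertible z in A and an element f with f^n = f, f*f = ff*, and z e z^{-1} = f. -/
/-!
Let `e ^ (n + 1) = e` and `p = e ^ n`, an idempotent with `p * e = e`. The weight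
`h = ∑_{j=1}^{n} (e^j)* e^j + (1 - p)* (1 - p)` satisfies `e* h e = h p`: conjugating by `e`
shifts the powers cyclically (`e^(n+1) = e`) and kills `(1 - p) e = 0`, while right
multiplication by `p` fixes every `e^j` and kills `1 - p`. When `n ≥ 1` the weight dominates
`p* p + (1 - p)* (1 - p) ≥ 1/2`, so `h = b* b` with `b` invertible, and `f = b e b⁻¹` satisfies
`f* f = f ^ n`. This makes `f* f` a projection absorbing `f`, from which `f* f = f f*`.
-/

section StarOrdered

variable {R : Type*} [NonUnitalRing R] [StarRing R] [PartialOrder R] [StarOrderedRing R]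

theorem star_add_mul_add_le_two_nsmul (a b : R) :
    star (a + b) * (a + b) ≤ 2 • (star a * a + star b * b) := by
  rw [← sub_nonneg]
  convert star_mul_self_nonneg (a - b) using 1
  simp only [star_add, star_sub]
  noncomm_ring

end StarOrdered

section StarMonoid

variable {M : Type*} [Monoid M] [StarMul M]

theorem Units.star_conj_mul_conj_eq (u : Mˣ) {x y : M}
    (h : star x * (star ↑u * ↑u) * x = star ↑u * ↑u * y) :
    star (↑u * x * ↑u⁻¹) * (↑u * x * ↑u⁻¹) = ↑u * y * ↑u⁻¹ := by
  calc star (↑u * x * ↑u⁻¹) * (↑u * x * ↑u⁻¹)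
      = star (↑u⁻¹ : M) * (star x * (star ↑u * ↑u) * x) * ↑u⁻¹ := by
        simp only [star_mul, mul_assoc]
    _ = star (↑u * ↑u⁻¹ : M) * ↑u * y * ↑u⁻¹ := by
        rw [h, star_mul]; simp only [mul_assoc]
    _ = ↑u * y * ↑u⁻¹ := by rw [Units.mul_inv, star_one, one_mul]

theorem star_mul_self_eq_mul_star_self_of_eq_pow {g : M} {n : ℕ} (hg : g ^ (n + 2) = g)
    (h : star g * g = g ^ (n + 1)) : star g * g = g * star g := by
  have hproj : star (g ^ (n + 1)) = g ^ (n + 1) := by rw [← h, star_mul, star_star]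
  have hstar : star g = g ^ (n + 1) * g ^ n := by
    calc star g = star (g ^ (n + 1) * g) := by rw [← pow_succ, hg]
      _ = star g * g * g ^ n := by rw [star_mul, hproj, pow_succ', mul_assoc]
      _ = g ^ (n + 1) * g ^ n := by rw [h]
  calc star g * g = g ^ (n + 1) := h
    _ = g * star g := by rw [hstar, ← mul_assoc, ← pow_succ', hg, pow_succ']

end StarMonoid

section Weight

variable {R : Type*} [Ring R] [StarRing R]

def npotentWeight (e : R) (n : ℕ) : R :=
  ∑ j ∈ Finset.range n, star (e ^ (j + 1)) * e ^ (j + 1) + star (1 - e ^ n) * (1 - e ^ n)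

theorem star_mul_npotentWeight_mul {e : R} {n : ℕ} (he : e ^ (n + 1) = e) :
    star e * npotentWeight e n * e = npotentWeight e n * e ^ n := by
  have hpe : (1 - e ^ n) * e = 0 := by rw [sub_mul, one_mul, ← pow_succ, he, sub_self]
  have hep (j : ℕ) : e ^ (j + 1) * e ^ n = e ^ (j + 1) := by
    rw [pow_succ, mul_assoc, ← pow_succ', he]
  have hpp : (1 - e ^ n) * e ^ n = 0 := by
    cases n with
    | zero => simp
    | succ k => rw [sub_mul, one_mul, hep, sub_self]
  have hshift : ∑ j ∈ Finset.range n, star (e ^ (j + 1 + 1)) * e ^ (j + 1 + 1) =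
      ∑ j ∈ Finset.range n, star (e ^ (j + 1)) * e ^ (j + 1) := by
    have h := Finset.sum_range_succ' (fun j ↦ star (e ^ (j + 1)) * e ^ (j + 1)) n
    simp only [Finset.sum_range_succ, he, zero_add, pow_one] at h
    exact (add_right_cancel h).symm
  calc star e * npotentWeight e n * e
      = ∑ j ∈ Finset.range n, star (e ^ (j + 1 + 1)) * e ^ (j + 1 + 1) +
          star ((1 - e ^ n) * e) * ((1 - e ^ n) * e) := by
        rw [npotentWeight, mul_add, add_mul, Finset.mul_sum, Finset.sum_mul]
        congr 1
        · refine Finset.sum_congr rfl fun j _ ↦ ?_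
          rw [pow_succ e (j + 1), star_mul]
          simp only [mul_assoc]
        · rw [star_mul]
          simp only [mul_assoc]
    _ = npotentWeight e n * e ^ n := by
        rw [hshift, hpe, mul_zero, add_zero, npotentWeight, add_mul, Finset.sum_mul,
          mul_assoc (star (1 - e ^ n)), hpp, mul_zero, add_zero]
        simp only [mul_assoc, hep]

end Weight

section CStarAlgebra

variable {A : Type*} [CStarAlgebra A] [PartialOrder A] [StarOrderedRing A]

theorem isStrictlyPositive_star_mul_self_add_star_mul_self {a b : A} (hab : a + b = 1) :
    IsStrictlyPositive (star a * a + star b * b) := by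
  have h : IsStrictlyPositive (2 • (star a * a + star b * b)) :=
    isStrictlyPositive_one.of_le (by simpa [hab] using star_add_mul_add_le_two_nsmul a b)
  have hhalf : ((2 : ℝ)⁻¹) • 2 • (star a * a + star b * b) = star a * a + star b * b := by
    rw [← Nat.cast_smul_eq_nsmul ℝ, Nat.cast_ofNat, inv_smul_smul₀ two_ne_zero]
  exact hhalf ▸ h.smul (by norm_num)

theorem isStrictlyPositive_npotentWeight_succ (e : A) (n : ℕ) :
    IsStrictlyPositive (npotentWeight e (n + 1)) := by
  rw [npotentWeight, Finset.sum_range_succ, add_assoc]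
  exact IsStrictlyPositive.nonneg_add (Finset.sum_nonneg fun _ _ ↦ star_mul_self_nonneg _)
    (isStrictlyPositive_star_mul_self_add_star_mul_self (add_sub_cancel _ _))

end CStarAlgebra

/-- Every `n`-potent in a unital C*-algebra is similar to a normal `n`-potent. -/
theorem npotent_similar_to_normal {A : Type*} [NormedRing A] [StarRing A]
    [CStarRing A] [NormedAlgebra ℂ A] [CompleteSpace A] [StarModule ℂ A]
    (n : ℕ) (hn : 2 ≤ n) (e : A) (he : e ^ n = e) :
    ∃ (z : Aˣ) (f : A), f ^ n = f ∧ star f * f = f * star f ∧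
      z.val * e * (z⁻¹).val = f := by
  let : CStarAlgebra A := ⟨⟩
  let := CStarAlgebra.spectralOrder A
  have := CStarAlgebra.spectralOrderedRing A
  obtain ⟨m, rfl⟩ : ∃ m, n = m + 2 := ⟨n - 2, by omega⟩
  obtain ⟨b, hb, hweight⟩ := CStarAlgebra.isStrictlyPositive_iff_eq_star_mul_self.mp
    (isStrictlyPositive_npotentWeight_succ e m)
  lift b to Aˣ using hb
  have hstar_mul_self := b.star_conj_mul_conj_eq (hweight ▸ star_mul_npotentWeight_mul he)
  have hpow : (↑b * e * ↑b⁻¹ : A) ^ (m + 2) = ↑b * e * ↑b⁻¹ := by rw [Units.conj_pow, he]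
  refine ⟨b, _, hpow, star_mul_self_eq_mul_star_self_of_eq_pow hpow ?_, rfl⟩
  rw [hstar_mul_self, Units.conj_pow]
end

section
/- Let R and S be rings, n ≥ 2, and let φ: R → S be an n-homomorphism, i.e. an additive map satisfying φ(a_1 a_2 ⋯ a_n) = φ(a_1)φ(a_2)⋯φ(a_n) for all a_1, …, a_n in R. If e and f are algebraically equivalent n-potents in R (so e^n = e, f^n = f, and e = ab, f = ba for some a, b in R), then φ(e) and φ(f) are n-potents in S that are algebraically equivalent: there exist a′, b′ in S with φ(e) = a′b′ and φ(f) = b′a′. -/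
/-!
Padding a product with copies of `1` shows that for fixed `b` the element `b' = φ b * φ 1 ^ (n - 2)`
satisfies `φ (x * b) = φ x * b'` and `φ (b * x) = b' * φ x` for every `x`. If `e = a * b` and
`f = b * a` are `n`-potents, then `x = e ^ (n - 1) * a` has `x * b = e ^ n = e` and
`b * x = (b * a) ^ n = f`, so `a' = φ x` and `b'` witness the equivalence of `φ e` and `φ f`.
-/

def IsNMultiplicative {M N : Type*} [Monoid M] [Monoid N] (n : ℕ) (φ : M → N) : Prop :=
  ∀ l : List M, l.length = n → φ l.prod = (l.map φ).prod

namespace IsNMultiplicative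

variable {M N : Type*} [Monoid M] [Monoid N] {n : ℕ} {φ : M → N}

theorem map_pow (hφ : IsNMultiplicative n φ) (x : M) : φ (x ^ n) = φ x ^ n := by
  simpa using hφ (List.replicate n x) List.length_replicate

theorem pow_map_of_pow_eq_self (hφ : IsNMultiplicative n φ) {x : M} (hx : x ^ n = x) :
    φ x ^ n = φ x := by
  rw [← hφ.map_pow, hx]

theorem exists_map_mul_eq_and_map_mul_eq (hφ : IsNMultiplicative n φ) (hn : 2 ≤ n) (b : M) :
    ∃ b' : N, ∀ x : M, φ (x * b) = φ x * b' ∧ φ (b * x) = b' * φ x := by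
  refine ⟨φ b * φ 1 ^ (n - 2), fun x => ⟨?_, ?_⟩⟩
  · have := hφ (x :: b :: List.replicate (n - 2) 1)
      (by simp only [List.length_cons, List.length_replicate]; omega)
    simpa [mul_assoc] using this
  · have := hφ ((b :: List.replicate (n - 2) 1) ++ [x])
      (by simp only [List.length_append, List.length_cons, List.length_replicate,
        List.length_nil]; omega)
    simpa [mul_assoc] using this

theorem exists_map_mul_eq_mul_and_map_mul_eq_mul (hφ : IsNMultiplicative n φ) (hn : 2 ≤ n)
    {a b : M} (hab : (a * b) ^ n = a * b) (hba : (b * a) ^ n = b * a) :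
    ∃ a' b' : N, φ (a * b) = a' * b' ∧ φ (b * a) = b' * a' := by
  obtain ⟨b', hb'⟩ := hφ.exists_map_mul_eq_and_map_mul_eq hn b
  have hn0 : n ≠ 0 := by omega
  have hright : (a * b) ^ (n - 1) * a * b = a * b := by
    rw [mul_assoc, pow_sub_one_mul hn0, hab]
  have hleft : b * ((a * b) ^ (n - 1) * a) = b * a := by
    rw [mul_pow_mul, ← mul_assoc, mul_pow_sub_one hn0, hba]
  refine ⟨φ ((a * b) ^ (n - 1) * a), b', ?_, ?_⟩
  · rw [← (hb' _).1, hright]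
  · rw [← (hb' _).2, hleft]

end IsNMultiplicative

theorem nhomomorphism_preserves_algEquiv_general {R S : Type*} [Ring R] [Ring S]
    (n : ℕ) (hn : 2 ≤ n) (φ : R → S)
    (hmul : ∀ l : List R, l.length = n → φ l.prod = (l.map φ).prod)
    (e f : R) (he : e ^ n = e) (hf : f ^ n = f)
    (h : ∃ a b : R, e = a * b ∧ f = b * a) :
    (φ e) ^ n = φ e ∧ (φ f) ^ n = φ f ∧
      ∃ a' b' : S, φ e = a' * b' ∧ φ f = b' * a' := by
  have hφ : IsNMultiplicative n φ := hmul
  obtain ⟨a, b, rfl, rfl⟩ := h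
  exact ⟨hφ.pow_map_of_pow_eq_self he, hφ.pow_map_of_pow_eq_self hf,
    hφ.exists_map_mul_eq_mul_and_map_mul_eq_mul hn he hf⟩

/-- An `n`-homomorphism `φ : R → S` between rings (an additive map satisfying
`φ(a₁ ⋯ aₙ) = φ(a₁) ⋯ φ(aₙ)`) sends algebraically equivalent `n`-potents to
algebraically equivalent `n`-potents. -/
theorem nhomomorphism_preserves_algEquiv {R S : Type*} [Ring R] [Ring S]
    (n : ℕ) (hn : 2 ≤ n) (φ : R → S)
    (hadd : ∀ x y : R, φ (x + y) = φ x + φ y)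
    (hmul : ∀ l : List R, l.length = n → φ l.prod = (l.map φ).prod)
    (e f : R) (he : e ^ n = e) (hf : f ^ n = f)
    (h : ∃ a b : R, e = a * b ∧ f = b * a) :
    (φ e) ^ n = φ e ∧ (φ f) ^ n = φ f ∧
      ∃ a' b' : S, φ e = a' * b' ∧ φ f = b' * a' :=
  nhomomorphism_preserves_algEquiv_general n hn φ hmul e f he hf h
end
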